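/- Let q = r·s with gcd(r, s) = 1, and let s̄ and r̄ denote inverses of s mod r and r mod s respectively. Then S(a, b; q) = S(a·s̄, b·s̄; r) · S(a·r̄, b·r̄; s), where S(a, b; m) := Σ'_{n=1}^{m} e((a·n² + b·n̄³)/m), the sum running over n coprime to m with n̄ the inverse of n mod m. -/

import Mathlib

/-- Kloosterman-type sum `S(a, b; m) = Σ'_{n=1}^{m} e((a n² + b n̄³)/m)`,
the sum running over `n` coprime to `m`, with `n̄` the inverse of `n` mod `m`. -/
noncomputable def Kl (m : ℕ) (a b : ℤ) : ℂ :=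
  ∑ n ∈ (Finset.Icc 1 m).filter (fun n => Nat.gcd n m = 1),
    Complex.exp (2 * Real.pi * Complex.I *
      (((a * (n : ℤ) ^ 2 + b * ((((n : ZMod m))⁻¹.val : ℤ)) ^ 3 : ℤ) : ℝ) / m))

/-!
By the Chinese remainder theorem, a unit mod `rs` is a pair of units mod `r` and mod `s`. Since
`s s̄ + r r̄ ≡ 1 (mod rs)`, the standard additive character mod `rs` splits as
`e(x / rs) = e(s̄ x / r) · e(r̄ x / s)`. Hence the sum factors, and the twists by `s̄` and `r̄` are
absorbed into the coefficients `a`, `b`.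
-/

open Finset

section KloostermanTypeSum

variable {R R₁ R₂ M : Type*} [CommRing R] [CommRing R₁] [CommRing R₂] [CommSemiring M]

def kloostermanTypeSum [Fintype Rˣ] (ψ : AddChar R M) (a b : R) : M :=
  ∑ u : Rˣ, ψ (a * u ^ 2 + b * ↑u⁻¹ ^ 3)

lemma kloostermanTypeSum_mulShift [Fintype Rˣ] (ψ : AddChar R M) (c a b : R) :
    kloostermanTypeSum (ψ.mulShift c) a b = kloostermanTypeSum ψ (c * a) (c * b) := by
  simp only [kloostermanTypeSum, AddChar.mulShift_apply, mul_add, mul_assoc]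

lemma kloostermanTypeSum_eq_mul_of_ringEquiv_prod [Fintype Rˣ] [Fintype R₁ˣ] [Fintype R₂ˣ]
    (e : R ≃+* R₁ × R₂) (ψ : AddChar R M) (ψ₁ : AddChar R₁ M) (ψ₂ : AddChar R₂ M)
    (hψ : ∀ x, ψ x = ψ₁ (e x).1 * ψ₂ (e x).2) (a b : R) :
    kloostermanTypeSum ψ a b =
      kloostermanTypeSum ψ₁ (e a).1 (e b).1 * kloostermanTypeSum ψ₂ (e a).2 (e b).2 := by
  let eu : Rˣ ≃* R₁ˣ × R₂ˣ := (Units.mapEquiv e.toMulEquiv).trans MulEquiv.prodUnits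
  rw [kloostermanTypeSum, kloostermanTypeSum, kloostermanTypeSum, ← eu.symm.toEquiv.sum_comp,
    Fintype.sum_prod_type, sum_mul_sum]
  refine sum_congr rfl fun x _ => sum_congr rfl fun y _ => ?_
  have he (w : Rˣ) : e w = (((eu w).1 : R₁), ((eu w).2 : R₂)) := rfl
  have hxy : eu (eu.symm.toEquiv (x, y)) = (x, y) := eu.apply_symm_apply _
  rw [hψ, map_add, map_mul, map_mul, map_pow, map_pow, he, he, map_inv, hxy]
  rfl

end KloostermanTypeSum

namespace ZMod

lemma stdAddChar_intCast_mul_of_mul_eq {m n N : ℕ} [NeZero m] [NeZero N] (h : m * n = N)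
    (j : ℤ) : stdAddChar ((n * j : ℤ) : ZMod N) = stdAddChar (j : ZMod m) := by
  have hn : (n : ℂ) ≠ 0 := by
    have hN := NeZero.ne N
    rw [← h] at hN
    exact_mod_cast right_ne_zero_of_mul hN
  rw [stdAddChar_coe, stdAddChar_coe, ← h]
  push_cast
  rw [mul_comm (m : ℂ), ← div_div, mul_div_assoc, mul_div_cancel_left₀ _ hn, mul_div_assoc]

lemma stdAddChar_eq_mul_of_chineseRemainder {r s : ℕ} [NeZero r] [NeZero s]
    (hrs : r.Coprime s) {sbar rbar : ℤ} (hsbar : (r : ℤ) ∣ s * sbar - 1)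
    (hrbar : (s : ℤ) ∣ r * rbar - 1) (x : ZMod (r * s)) :
    stdAddChar x = stdAddChar ((sbar : ZMod r) * (chineseRemainder hrs x).1)
      * stdAddChar ((rbar : ZMod s) * (chineseRemainder hrs x).2) := by
  have hdvd : ((r * s : ℕ) : ℤ) ∣ s * sbar + r * rbar - 1 := by
    push_cast
    refine (Nat.isCoprime_iff_coprime.mpr hrs).mul_dvd ?_ ?_
    · simpa [add_sub_right_comm] using hsbar
    · simpa [add_sub_assoc] using hrbar
  obtain ⟨j, rfl⟩ := intCast_surjective x
  have hj : (j : ZMod (r * s)) = ((s * (sbar * j) + r * (rbar * j) : ℤ) : ZMod (r * s)) := by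
    rw [intCast_eq_intCast_iff_dvd_sub]
    exact (hdvd.mul_right j).trans ⟨1, by ring⟩
  rw [map_intCast (chineseRemainder hrs) j, hj, Int.cast_add, AddChar.map_add_eq_mul,
    stdAddChar_intCast_mul_of_mul_eq rfl, stdAddChar_intCast_mul_of_mul_eq (mul_comm s r)]
  simp only [Int.cast_mul, Prod.fst_intCast, Prod.snd_intCast]

lemma sum_filter_coprime_Icc_eq_sum_units {M : Type*} [AddCommMonoid M] (m : ℕ) [NeZero m]
    (f : ZMod m → M) :
    ∑ n ∈ (Icc 1 m).filter (fun n => n.gcd m = 1), f n = ∑ u : (ZMod m)ˣ, f u := by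
  -- `(x - 1).val + 1` is the representative of `x` in `[1, m]`
  have hval (x : ZMod m) : (((x - 1).val + 1 : ℕ) : ZMod m) = x := by
    push_cast; rw [natCast_zmod_val, sub_add_cancel]
  refine sum_bij' (fun n hn => unitOfCoprime n (mem_filter.mp hn).2)
    (fun u _ => ((u : ZMod m) - 1).val + 1) (fun _ _ => mem_univ _) ?_ ?_ ?_ ?_
  · intro u _
    have hlt := val_lt ((u : ZMod m) - 1)
    refine mem_filter.mpr ⟨mem_Icc.mpr ⟨by omega, by omega⟩, ?_⟩
    rw [← Nat.coprime_iff_gcd_eq_one, ← isUnit_iff_coprime, hval]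
    exact u.isUnit
  · intro n hn
    obtain ⟨hn1, hnm⟩ := mem_Icc.mp (mem_filter.mp hn).1
    rw [coe_unitOfCoprime, ← Nat.cast_one, ← Nat.cast_sub hn1, val_natCast_of_lt (by omega)]
    omega
  · intro u _
    ext
    rw [coe_unitOfCoprime, hval]
  · intro n _
    rw [coe_unitOfCoprime]

end ZMod

lemma Kl_eq_kloostermanTypeSum (m : ℕ) [NeZero m] (a b : ℤ) :
    Kl m a b = kloostermanTypeSum ZMod.stdAddChar (a : ZMod m) (b : ZMod m) := by
  have hterm (n : ℕ) : Complex.exp (2 * Real.pi * Complex.I *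
      (((a * (n : ℤ) ^ 2 + b * ((((n : ZMod m))⁻¹.val : ℤ)) ^ 3 : ℤ) : ℝ) / m)) =
      ZMod.stdAddChar ((a : ZMod m) * (n : ZMod m) ^ 2 + (b : ZMod m) * (n : ZMod m)⁻¹ ^ 3) := by
    have := ZMod.stdAddChar_coe (N := m) (a * n ^ 2 + b * ((((n : ZMod m))⁻¹.val : ℤ)) ^ 3)
    push_cast at this ⊢
    rw [ZMod.natCast_zmod_val] at this
    rw [this, mul_div_assoc]
  unfold Kl
  rw [sum_congr rfl fun n _ => hterm n, ZMod.sum_filter_coprime_Icc_eq_sum_units m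
    fun x => ZMod.stdAddChar ((a : ZMod m) * x ^ 2 + (b : ZMod m) * x⁻¹ ^ 3)]
  simp only [kloostermanTypeSum, ZMod.inv_coe_unit]

theorem Kl_multiplicative (q r s : ℕ) (hr : 0 < r) (hs : 0 < s) (hq : q = r * s)
    (hrs : Nat.gcd r s = 1) (a b sbar rbar : ℤ)
    (hsbar : (r : ℤ) ∣ s * sbar - 1) (hrbar : (s : ℤ) ∣ r * rbar - 1) :
    Kl q a b = Kl r (a * sbar) (b * sbar) * Kl s (a * rbar) (b * rbar) := by
  subst hq
  have : NeZero r := ⟨hr.ne'⟩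
  have : NeZero s := ⟨hs.ne'⟩
  let e := ZMod.chineseRemainder hrs
  rw [Kl_eq_kloostermanTypeSum, Kl_eq_kloostermanTypeSum, Kl_eq_kloostermanTypeSum,
    kloostermanTypeSum_eq_mul_of_ringEquiv_prod e _ (ZMod.stdAddChar.mulShift sbar)
      (ZMod.stdAddChar.mulShift rbar)
      (ZMod.stdAddChar_eq_mul_of_chineseRemainder hrs hsbar hrbar),
    kloostermanTypeSum_mulShift, kloostermanTypeSum_mulShift, map_intCast e a, map_intCast e b]
  simp only [Prod.fst_intCast, Prod.snd_intCast, Int.cast_mul, mul_comm]
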